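/- If C ⊆ K² is a connected subset, then Γ⁻¹(C) is an 8-connected subset of ℤ². -/
import Mathlib


open TopologicalSpace

/-- Basic (minimal) neighborhoods generating the Khalimsky topology on ℤ. -/
def khN (n : ℤ) : Set ℤ := if Odd n then {n} else {n - 1, n, n + 1}

/-- The Khalimsky (digital) topology on the integers. -/
def khLine : TopologicalSpace ℤ := generateFrom (Set.range khN)

/-- The Khalimsky topology on the digital plane ℤ × ℤ (product topology). -/
def khPlane : TopologicalSpace (ℤ × ℤ) :=
  @instTopologicalSpaceProd ℤ ℤ khLine khLine

/-- A point of the digital plane is pure if both coordinates have the same parity. -/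
def IsPure (p : ℤ × ℤ) : Prop := p.1 % 2 = p.2 % 2

/-- A point of the digital plane is mixed if it is not pure. -/
def IsMixed (p : ℤ × ℤ) : Prop := ¬ IsPure p

/-- A closed (pure) point: both coordinates even. -/
def IsClosedPt (p : ℤ × ℤ) : Prop := Even p.1 ∧ Even p.2

/-- An open (pure) point: both coordinates odd. -/
def IsOpenPt (p : ℤ × ℤ) : Prop := Odd p.1 ∧ Odd p.2

/-- The minimal open neighborhood N(x) of a point in the digital plane. -/
def minN (x : ℤ × ℤ) : Set (ℤ × ℤ) := ⋂₀ {U : Set (ℤ × ℤ) | khPlane.IsOpen U ∧ x ∈ U}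

/-- The closure cl(x) of a singleton in the digital plane. -/
def clPt (x : ℤ × ℤ) : Set (ℤ × ℤ) := @closure (ℤ × ℤ) khPlane {x}

/-- The adjacency set A(x) of a point of the digital plane. -/
def AdjSet (x : ℤ × ℤ) : Set (ℤ × ℤ) :=
  {y | y ≠ x ∧ @IsConnected (ℤ × ℤ) khPlane {x, y}}

/-- An arc: a subset of the digital plane homeomorphic (in the subspace topology)
to a finite interval of the Khalimsky line. -/
def IsArc (C : Set (ℤ × ℤ)) : Prop :=
  ∃ a b : ℤ,
    Nonempty (@Homeomorph (↥C) (↥(Set.Icc a b))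
      (TopologicalSpace.induced Subtype.val khPlane)
      (TopologicalSpace.induced Subtype.val khLine))

/-- z is an endpoint of the arc C: it has exactly one adjacent point within C. -/
def IsEndpointOf (z : ℤ × ℤ) (C : Set (ℤ × ℤ)) : Prop :=
  z ∈ C ∧ (AdjSet z ∩ C).encard = 1

/-- A Jordan curve in the digital plane. -/
def IsJordanCurve (J : Set (ℤ × ℤ)) : Prop :=
  @IsConnected (ℤ × ℤ) khPlane J ∧ 4 ≤ J.encard ∧ ∀ x ∈ J, IsArc (J \ {x})

/-- The slant embedding Γ(x,y) = (x+y, y−x) of the Rosenfeld plane into the digital plane. -/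
def Γmap (p : ℤ × ℤ) : ℤ × ℤ := (p.1 + p.2, p.2 - p.1)

/-- The operator Γ* turning subsets of ℤ² into subsets of the digital plane. -/
def ΓStar (A : Set (ℤ × ℤ)) : Set (ℤ × ℤ) :=
  Γmap '' A ∪
    {x | IsMixed x ∧ (minN x ⊆ Γmap '' A ∪ {x} ∨ clPt x ⊆ Γmap '' A ∪ {x})}

/-- 8-adjacency in ℤ². -/
def Adj8 (p q : ℤ × ℤ) : Prop := p ≠ q ∧ |p.1 - q.1| ≤ 1 ∧ |p.2 - q.2| ≤ 1

/-- 4-adjacency in ℤ². -/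
def Adj4 (p q : ℤ × ℤ) : Prop := p ≠ q ∧ |p.1 - q.1| + |p.2 - q.2| = 1

/-- The 8-neighbours of x within C. -/
def nbrs8 (C : Set (ℤ × ℤ)) (x : ℤ × ℤ) : Set (ℤ × ℤ) := {y ∈ C | Adj8 x y}

/-- The 4-neighbours of x within C. -/
def nbrs4 (C : Set (ℤ × ℤ)) (x : ℤ × ℤ) : Set (ℤ × ℤ) := {y ∈ C | Adj4 x y}

/-- x is an 8-endpoint of C. -/
def Is8Endpoint (C : Set (ℤ × ℤ)) (x : ℤ × ℤ) : Prop :=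
  x ∈ C ∧ (nbrs8 C x).encard = 1

/-- x is a 4-endpoint of C. -/
def Is4Endpoint (C : Set (ℤ × ℤ)) (x : ℤ × ℤ) : Prop :=
  x ∈ C ∧ (nbrs4 C x).encard = 1

/-- An 8-path: a finite set with exactly two 8-endpoints, every other point
having exactly two 8-adjacent points in the set. -/
def Is8Path (C : Set (ℤ × ℤ)) : Prop :=
  C.Finite ∧ {x | Is8Endpoint C x}.encard = 2 ∧
    ∀ x ∈ C, ¬ Is8Endpoint C x → (nbrs8 C x).encard = 2

/-- A 4-path. -/
def Is4Path (C : Set (ℤ × ℤ)) : Prop :=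
  C.Finite ∧ {x | Is4Endpoint C x}.encard = 2 ∧
    ∀ x ∈ C, ¬ Is4Endpoint C x → (nbrs4 C x).encard = 2

/-- A closed 8-curve: every point has exactly two 8-adjacent points in the set. -/
def Is8ClosedCurve (C : Set (ℤ × ℤ)) : Prop :=
  C.Finite ∧ ∀ x ∈ C, (nbrs8 C x).encard = 2

/-- A closed 4-curve. -/
def Is4ClosedCurve (C : Set (ℤ × ℤ)) : Prop :=
  C.Finite ∧ ∀ x ∈ C, (nbrs4 C x).encard = 2

/-- 8-connectedness: there is no partition into two nonempty pieces that are
not 8-adjacent to each other. -/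
def Conn8 (S : Set (ℤ × ℤ)) : Prop :=
  ¬ ∃ A B : Set (ℤ × ℤ), A.Nonempty ∧ B.Nonempty ∧ A ∪ B = S ∧ A ∩ B = ∅ ∧
      ∀ a ∈ A, ∀ b ∈ B, ¬ Adj8 a b

/-- 4-connectedness. -/
def Conn4 (S : Set (ℤ × ℤ)) : Prop :=
  ¬ ∃ A B : Set (ℤ × ℤ), A.Nonempty ∧ B.Nonempty ∧ A ∪ B = S ∧ A ∩ B = ∅ ∧
      ∀ a ∈ A, ∀ b ∈ B, ¬ Adj4 a b

/-- T is a 4-component of S: a maximal 4-connected subset of S. -/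
def Is4CompOf (T S : Set (ℤ × ℤ)) : Prop :=
  T ⊆ S ∧ Conn4 T ∧ ∀ T' : Set (ℤ × ℤ), T ⊆ T' → T' ⊆ S → Conn4 T' → T' = T

/-- U is a connected component of S in the digital plane. -/
def IsCompOf (U S : Set (ℤ × ℤ)) : Prop :=
  ∃ x ∈ S, @connectedComponentIn (ℤ × ℤ) khPlane S x = U

/-- The set S_J of mixed points of Γ*(Γ⁻¹(J)) having exactly three adjacent points in J. -/
def SJ (J : Set (ℤ × ℤ)) : Set (ℤ × ℤ) :=
  {m | m ∈ ΓStar (Γmap ⁻¹' J) ∧ IsMixed m ∧ (AdjSet m ∩ J).encard = 3}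


section Aux

lemma mem_khN_iff {m n : ℤ} : m ∈ khN n ↔ (m = n ∨ (n % 2 = 0 ∧ (m = n - 1 ∨ m = n + 1))) := by
  unfold khN
  split_ifs with h
  · have := Int.odd_iff.mp h
    simp only [Set.mem_singleton_iff]
    omega
  · have := Int.not_odd_iff.mp h
    simp only [Set.mem_insert_iff, Set.mem_singleton_iff]
    omega

lemma mem_khN_self (n : ℤ) : n ∈ khN n := mem_khN_iff.mpr (Or.inl rfl)

lemma khN_subset {m n : ℤ} (h : m ∈ khN n) : khN m ⊆ khN n := by
  intro k hk
  rw [mem_khN_iff] at *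
  omega

lemma khN_isOpen (n : ℤ) : khLine.IsOpen (khN n) :=
  TopologicalSpace.GenerateOpen.basic _ ⟨n, rfl⟩

lemma khN_min {U : Set ℤ} (hU : khLine.IsOpen U) : ∀ n ∈ U, khN n ⊆ U := by
  induction hU with
  | basic V hV => obtain ⟨m, rfl⟩ := hV; exact fun n hn => khN_subset hn
  | univ => intro n _; exact Set.subset_univ _
  | inter V W _ _ ihV ihW => intro n hn; exact Set.subset_inter (ihV n hn.1) (ihW n hn.2)
  | sUnion S _ ih =>
      intro n hn
      obtain ⟨V, hV, hnV⟩ := hn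
      exact (ih V hV n hnV).trans (Set.subset_sUnion_of_mem hV)

/-- Product minimal neighbourhood. -/
def N2 (x : ℤ × ℤ) : Set (ℤ × ℤ) := khN x.1 ×ˢ khN x.2

/-- Topological adjacency (linkedness). -/
def Lk (x y : ℤ × ℤ) : Prop := x ∈ N2 y ∨ y ∈ N2 x

lemma mem_N2_self (x : ℤ × ℤ) : x ∈ N2 x := ⟨mem_khN_self _, mem_khN_self _⟩

lemma Lk_symm {x y : ℤ × ℤ} (h : Lk x y) : Lk y x := h.symm

lemma N2_isOpen (x : ℤ × ℤ) : khPlane.IsOpen (N2 x) :=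
  @IsOpen.prod ℤ ℤ khLine khLine _ _ (khN_isOpen _) (khN_isOpen _)

lemma chain_of_preconnected {C : Set (ℤ × ℤ)} (hC : @IsPreconnected _ khPlane C)
    {x y : ℤ × ℤ} (hx : x ∈ C) (hy : y ∈ C) :
    Relation.ReflTransGen (fun a b => b ∈ C ∧ Lk a b) x y := by
  by_contra hxy
  set R : ℤ × ℤ → ℤ × ℤ → Prop := fun a b => b ∈ C ∧ Lk a b with hR
  set S : Set (ℤ × ℤ) := {z | z ∈ C ∧ Relation.ReflTransGen R x z} with hS
  letI : TopologicalSpace (ℤ × ℤ) := khPlane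
  have hU : khPlane.IsOpen (⋃ z ∈ S, N2 z) :=
    isOpen_biUnion (fun z _ => N2_isOpen z)
  have hV : khPlane.IsOpen (⋃ z ∈ C \ S, N2 z) :=
    isOpen_biUnion (fun z _ => N2_isOpen z)
  obtain ⟨z, hzC, hzU, hzV⟩ := hC _ _ hU hV
    (fun c hc => by
      by_cases hcS : c ∈ S
      · exact Or.inl (Set.mem_biUnion hcS (mem_N2_self c))
      · exact Or.inr (Set.mem_biUnion ⟨hc, hcS⟩ (mem_N2_self c)))
    ⟨x, hx, Set.mem_biUnion ⟨hx, Relation.ReflTransGen.refl⟩ (mem_N2_self x)⟩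
    ⟨y, hy, Set.mem_biUnion ⟨hy, fun h : y ∈ S => hxy h.2⟩ (mem_N2_self y)⟩
  obtain ⟨w, hwS, hzw⟩ := Set.mem_iUnion₂.mp hzU
  obtain ⟨w', hw'CS, hzw'⟩ := Set.mem_iUnion₂.mp hzV
  have hzS : z ∈ S := ⟨hzC, hwS.2.tail ⟨hzC, Or.inr hzw⟩⟩
  exact hw'CS.2 ⟨hw'CS.1, hzS.2.tail ⟨hw'CS.1, Or.inl hzw'⟩⟩

set_option maxHeartbeats 1000000 in
lemma key_mixed {x p q : ℤ × ℤ} (hx : IsMixed x) (hp : Lk x (Γmap p)) (hq : Lk x (Γmap q)) :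
    p = q ∨ Adj8 p q := by
  obtain ⟨x1, x2⟩ := x; obtain ⟨p1, p2⟩ := p; obtain ⟨q1, q2⟩ := q
  simp only [Lk, N2, Γmap, IsMixed, IsPure, Adj8, Set.mem_prod, mem_khN_iff,
    Prod.mk.injEq, abs_le, ne_eq, not_and] at *
  omega

set_option maxHeartbeats 1000000 in
lemma key_pure {p q : ℤ × ℤ} (h : Lk (Γmap p) (Γmap q)) : p = q ∨ Adj8 p q := by
  obtain ⟨p1, p2⟩ := p; obtain ⟨q1, q2⟩ := q
  simp only [Lk, N2, Γmap, Adj8, Set.mem_prod, mem_khN_iff,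
    Prod.mk.injEq, abs_le, ne_eq, not_and] at *
  omega

lemma mixed_mixed {x y : ℤ × ℤ} (hx : IsMixed x) (hy : IsMixed y) (h : Lk x y) : x = y := by
  obtain ⟨x1, x2⟩ := x; obtain ⟨y1, y2⟩ := y
  simp only [Lk, N2, IsMixed, IsPure, Set.mem_prod, mem_khN_iff, Prod.mk.injEq] at *
  omega

lemma pure_gamma (p : ℤ × ℤ) : IsPure (Γmap p) := by
  obtain ⟨p1, p2⟩ := p; simp only [IsPure, Γmap]; omega

lemma gamma_inj {p q : ℤ × ℤ} (h : Γmap p = Γmap q) : p = q := by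
  obtain ⟨p1, p2⟩ := p; obtain ⟨q1, q2⟩ := q
  simp only [Γmap, Prod.mk.injEq] at *; omega

lemma pure_surj {w : ℤ × ℤ} (hw : IsPure w) : ∃ s, Γmap s = w := by
  obtain ⟨w1, w2⟩ := w
  refine ⟨⟨(w1 - w2) / 2, (w1 + w2) / 2⟩, ?_⟩
  simp only [IsPure, Γmap, Prod.mk.injEq] at *
  omega

end Aux

/-- If C ⊆ K² is connected, then Γ⁻¹(C) is 8-connected. -/
theorem preimage_conn8_of_connected (C : Set (ℤ × ℤ))
    (hC : @IsConnected (ℤ × ℤ) khPlane C) :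
    Conn8 (Γmap ⁻¹' C) := by
  rintro ⟨A, B, ⟨a, ha⟩, ⟨b, hb⟩, hunion, hdisj, hsep⟩
  have hAsub : A ⊆ Γmap ⁻¹' C := hunion ▸ Set.subset_union_left
  have hBsub : B ⊆ Γmap ⁻¹' C := hunion ▸ Set.subset_union_right
  have haC : Γmap a ∈ C := hAsub ha
  have hbC : Γmap b ∈ C := hBsub hb
  have hchain := chain_of_preconnected hC.2 haC hbC
  have hdisj' : ∀ r, r ∈ A → r ∈ B → False := by
    intro r h1 h2
    have : r ∈ A ∩ B := ⟨h1, h2⟩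
    rw [hdisj] at this
    exact this
  have hside : ∀ s, Γmap s ∈ C → s ∈ A ∨ s ∈ B := by
    intro s hs
    have hs' : s ∈ Γmap ⁻¹' C := hs
    rw [← hunion] at hs'
    exact hs'
  have hsideA : ∀ r s, r ∈ A → (r = s ∨ Adj8 r s) → s ∈ A ∨ s ∈ B → s ∈ A := by
    intro r s hr h hs
    rcases hs with hs | hs
    · exact hs
    · rcases h with rfl | hadj
      · exact absurd hs (fun h => hdisj' r hr h)
      · exact absurd hadj (hsep r hr s hs)
  have hI : ∀ z, Relation.ReflTransGen (fun u v => v ∈ C ∧ Lk u v) (Γmap a) z →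
      ((∃ r ∈ A, Γmap r = z) ∨ (IsMixed z ∧ ∃ r ∈ A, Lk z (Γmap r))) := by
    intro z hz
    induction hz with
    | refl => exact Or.inl ⟨a, ha, rfl⟩
    | @tail c w _ step ih =>
      obtain ⟨hwC, hlk⟩ := step
      by_cases hw : IsPure w
      · obtain ⟨s, rfl⟩ := pure_surj hw
        have hsAB : s ∈ A ∨ s ∈ B := hside s hwC
        rcases ih with ⟨r, hr, rfl⟩ | ⟨hcm, r, hr, hlkr⟩
        · exact Or.inl ⟨s, hsideA r s hr (key_pure hlk) hsAB, rfl⟩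
        · exact Or.inl ⟨s, hsideA r s hr (key_mixed hcm hlkr hlk) hsAB, rfl⟩
      · rcases ih with ⟨r, hr, rfl⟩ | ⟨hcm, r, hr, hlkr⟩
        · exact Or.inr ⟨hw, r, hr, Lk_symm hlk⟩
        · have hcw : c = w := mixed_mixed hcm hw hlk
          rw [← hcw]
          exact Or.inr ⟨hcm, r, hr, hlkr⟩
  rcases hI (Γmap b) hchain with ⟨r, hr, heq⟩ | ⟨hm, _⟩
  · exact hdisj' b ((gamma_inj heq) ▸ hr) hb
  · exact hm (pure_gamma b)
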